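/- arXiv:2504.16689 — 5 statements merged into one kernel-verified Lean document; each statement's English description precedes it below -/
import Mathlib

section
/- Let R be a ring equipped with a positive exhaustive filtration F_0 R ⊆ F_1 R ⊆ ⋯ with ∪_i F_i R = R and F_i R · F_j R ⊆ F_{i+j} R. If the associated graded ring gr_F R = ⊕_i F_i R / F_{i-1} R is left noetherian, then R is left noetherian. -/
/-!
Send a left ideal `I` of `R` to the left ideal of `gr_F R` generated by the symbols of its
elements. In each degree `n`, the homogeneous elements of this ideal are exactly the symbols
of elements of `I ∩ F_n R`, because the symbols of `I` already form a graded left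
`gr_F R`-submodule. Hence if `I ≤ J` have the same symbol ideal, every `x ∈ J ∩ F_n R` differs
from some `z ∈ I ∩ F_n R` by an element of `J ∩ F_{n-1} R`, and induction on `n` gives `J ≤ I`.
So the symbol ideal is strictly monotone in `I`, and the ascending chain condition on left ideals of
`gr_F R` pulls back to `R`.
-/

open DirectSum

namespace DirectSum

section Decomposition

variable {ι M : Type*} [DecidableEq ι] [AddCommGroup M] {𝒜 B : ι → AddSubgroup M}
  [Decomposition 𝒜]

theorem decompose_mem_of_mem_iSup (hB : ∀ i, B i ≤ 𝒜 i) {x : M} (hx : x ∈ ⨆ i, B i) (i : ι) :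
    (decompose 𝒜 x i : M) ∈ B i := by
  refine AddSubgroup.iSup_induction B (C := fun y ↦ (decompose 𝒜 y i : M) ∈ B i) hx
    (fun j y hy ↦ ?_) (by simp) fun y z hy hz ↦ ?_
  · by_cases hji : j = i
    · subst hji
      rwa [decompose_of_mem_same 𝒜 (hB j hy)]
    · rw [decompose_of_mem_ne 𝒜 (hB j hy) hji]
      exact zero_mem _
  · rw [decompose_add, add_apply, AddSubgroup.coe_add]
    exact add_mem hy hz

theorem mem_of_mem_iSup_of_mem (hB : ∀ i, B i ≤ 𝒜 i) {x : M} {i : ι} (hxi : x ∈ 𝒜 i)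
    (hx : x ∈ ⨆ i, B i) : x ∈ B i := by
  simpa only [decompose_of_mem_same 𝒜 hxi] using decompose_mem_of_mem_iSup hB hx i

end Decomposition

section GradedIdeal

variable {ι S : Type*} [DecidableEq ι] [AddMonoid ι] [Ring S] {𝒜 B : ι → AddSubgroup S}
  [Decomposition 𝒜]

theorem mul_mem_iSup_of_mul_mem (hmul : ∀ i j, ∀ s ∈ 𝒜 i, ∀ w ∈ B j, s * w ∈ B (i + j))
    (c : S) {a : S} (ha : a ∈ ⨆ i, B i) : c * a ∈ ⨆ i, B i := by
  classical
  refine AddSubgroup.iSup_induction B (C := fun a ↦ c * a ∈ ⨆ i, B i) ha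
    (fun j w hw ↦ ?_) (by simp) fun a b ha hb ↦ by simpa only [mul_add] using add_mem ha hb
  rw [← sum_support_decompose 𝒜 c, Finset.sum_mul]
  exact sum_mem fun i _ ↦
    AddSubgroup.mem_iSup_of_mem (i + j) (hmul i j _ (decompose 𝒜 c i).2 w hw)

theorem span_iUnion_le_iSup_of_mul_mem
    (hmul : ∀ i j, ∀ s ∈ 𝒜 i, ∀ w ∈ B j, s * w ∈ B (i + j)) :
    (Ideal.span (⋃ i, (B i : Set S))).toAddSubgroup ≤ ⨆ i, B i := by
  intro a ha
  induction ha using Submodule.span_induction with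
  | mem x hx =>
    obtain ⟨i, hi⟩ := Set.mem_iUnion.1 hx
    exact AddSubgroup.mem_iSup_of_mem i hi
  | zero => exact zero_mem _
  | add x y _ _ hx hy => exact add_mem hx hy
  | smul c x _ hx => exact mul_mem_iSup_of_mul_mem hmul c hx

end GradedIdeal

end DirectSum

namespace FilteredRing

variable {R S : Type*} [Ring R] [Ring S] {F : ℕ → AddSubgroup R} (φ : ∀ i, F i →+ S)

def symbols (I : Ideal R) (n : ℕ) : AddSubgroup S :=
  (I.toAddSubgroup.comap (F n).subtype).map (φ n)

def symbolIdeal (I : Ideal R) : Ideal S :=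
  Ideal.span (⋃ n, (symbols φ I n : Set S))

theorem symbols_mono {I J : Ideal R} (hIJ : I ≤ J) (n : ℕ) : symbols φ I n ≤ symbols φ J n :=
  AddSubgroup.map_mono fun _ hx ↦ hIJ hx

theorem symbolIdeal_mono : Monotone (symbolIdeal φ) := fun _ _ hIJ ↦
  Ideal.span_mono <| Set.iUnion_mono fun n ↦ symbols_mono φ hIJ n

theorem le_of_symbols_le (hexh : ∀ r : R, ∃ i, r ∈ F i)
    (hker0 : ∀ x : F 0, φ 0 x = 0 → x = 0)
    (hker : ∀ i : ℕ, ∀ x : F (i + 1), φ (i + 1) x = 0 ↔ (x : R) ∈ F i)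
    {I J : Ideal R} (hIJ : I ≤ J) (h : ∀ n, symbols φ J n ≤ symbols φ I n) : J ≤ I := by
  have approx : ∀ n (x : F n), (x : R) ∈ J → ∃ z : F n, (z : R) ∈ I ∧ φ n (x - z) = 0 := by
    intro n x hxJ
    obtain ⟨z, hzI, hz⟩ := h n ⟨x, hxJ, rfl⟩
    exact ⟨z, hzI, by rw [map_sub, hz, sub_self]⟩
  have filtered : ∀ n, ∀ x ∈ F n, x ∈ J → x ∈ I := by
    intro n
    induction n with
    | zero =>
      intro x hx hxJ
      obtain ⟨z, hzI, hz⟩ := approx 0 ⟨x, hx⟩ hxJ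
      rwa [show x = z from congrArg Subtype.val (sub_eq_zero.1 (hker0 _ hz))]
    | succ m ih =>
      intro x hx hxJ
      obtain ⟨z, hzI, hz⟩ := approx (m + 1) ⟨x, hx⟩ hxJ
      have hxz : x - z ∈ I := ih _ ((hker m _).1 hz) (J.sub_mem hxJ (hIJ hzI))
      simpa using I.add_mem hxz hzI
  intro x hxJ
  obtain ⟨n, hn⟩ := hexh x
  exact filtered n x hn hxJ

section Graded

variable {𝒜 : ℕ → AddSubgroup S}

theorem symbols_le (hrange : ∀ i, (φ i).range = 𝒜 i) (I : Ideal R) (n : ℕ) :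
    symbols φ I n ≤ 𝒜 n := by
  rintro _ ⟨x, -, rfl⟩
  exact hrange n ▸ ⟨x, rfl⟩

theorem mul_mem_symbols (hrange : ∀ i, (φ i).range = 𝒜 i)
    (hmul : ∀ i j : ℕ, ∀ x ∈ F i, ∀ y ∈ F j, x * y ∈ F (i + j))
    (hφmul : ∀ (i j : ℕ) (x : F i) (y : F j),
      φ (i + j) ⟨(x : R) * (y : R), hmul i j x x.2 y y.2⟩ = φ i x * φ j y)
    (I : Ideal R) (i j : ℕ) : ∀ s ∈ 𝒜 i, ∀ w ∈ symbols φ I j, s * w ∈ symbols φ I (i + j) := by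
  rintro s hs _ ⟨x, hxI, rfl⟩
  obtain ⟨r, rfl⟩ : s ∈ (φ i).range := (hrange i).symm ▸ hs
  exact ⟨⟨(r : R) * x, hmul i j r r.2 x x.2⟩, I.mul_mem_left (r : R) hxI, hφmul i j r x⟩

theorem symbols_le_of_symbolIdeal_le [Decomposition 𝒜] (hrange : ∀ i, (φ i).range = 𝒜 i)
    (hmul : ∀ i j : ℕ, ∀ x ∈ F i, ∀ y ∈ F j, x * y ∈ F (i + j))
    (hφmul : ∀ (i j : ℕ) (x : F i) (y : F j),
      φ (i + j) ⟨(x : R) * (y : R), hmul i j x x.2 y y.2⟩ = φ i x * φ j y)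
    {I J : Ideal R} (h : symbolIdeal φ J ≤ symbolIdeal φ I) (n : ℕ) :
    symbols φ J n ≤ symbols φ I n := fun _ hs ↦
  mem_of_mem_iSup_of_mem (symbols_le φ hrange I) (symbols_le φ hrange J n hs) <|
    span_iUnion_le_iSup_of_mul_mem (mul_mem_symbols φ hrange hmul hφmul I) <|
      h <| Ideal.subset_span <| Set.mem_iUnion_of_mem n hs

end Graded

end FilteredRing

open FilteredRing in
theorem noetherian_of_noetherian_graded_general
    (R : Type*) [Ring R]
    (F : ℕ → AddSubgroup R)
    (hmul : ∀ i j : ℕ, ∀ x ∈ F i, ∀ y ∈ F j, x * y ∈ F (i + j))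
    (hexh : ∀ r : R, ∃ i, r ∈ F i)
    -- the associated graded ring
    (S : Type*) [Ring S]
    (𝒜 : ℕ → AddSubgroup S)
    (hinternal : DirectSum.IsInternal 𝒜)
    (φ : ∀ i : ℕ, F i →+ S)
    (hrange : ∀ i, (φ i).range = 𝒜 i)
    (hker0 : ∀ x : F 0, φ 0 x = 0 → x = 0)
    (hker : ∀ i : ℕ, ∀ x : F (i + 1), φ (i + 1) x = 0 ↔ (x : R) ∈ F i)
    (hφmul : ∀ (i j : ℕ) (x : F i) (y : F j),
      φ (i + j) ⟨(x : R) * (y : R), hmul i j x x.2 y y.2⟩ = φ i x * φ j y)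
    (hS : IsNoetherianRing S) :
    IsNoetherianRing R := by
  have : Decomposition 𝒜 := hinternal.chooseDecomposition
  have hstrict : StrictMono (symbolIdeal φ) := fun I J hIJ ↦
    (symbolIdeal_mono φ hIJ.le).lt_of_not_ge fun h ↦ hIJ.not_ge <|
      le_of_symbols_le φ hexh hker0 hker hIJ.le <|
        symbols_le_of_symbolIdeal_le φ hrange hmul hφmul h
  rw [isNoetherianRing_iff, isNoetherian_iff'] at hS ⊢
  exact hstrict.wellFoundedGT

theorem noetherian_of_noetherian_graded
    (R : Type*) [Ring R]
    (F : ℕ → AddSubgroup R)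
    (hmono : Monotone F)
    (hone : (1 : R) ∈ F 0)
    (hmul : ∀ i j : ℕ, ∀ x ∈ F i, ∀ y ∈ F j, x * y ∈ F (i + j))
    (hexh : ∀ r : R, ∃ i, r ∈ F i)
    -- the associated graded ring
    (S : Type*) [Ring S]
    (𝒜 : ℕ → AddSubgroup S)
    (hinternal : DirectSum.IsInternal 𝒜)
    (φ : ∀ i : ℕ, F i →+ S)
    (hrange : ∀ i, (φ i).range = 𝒜 i)
    (hker0 : ∀ x : F 0, φ 0 x = 0 → x = 0)
    (hker : ∀ i : ℕ, ∀ x : F (i + 1), φ (i + 1) x = 0 ↔ (x : R) ∈ F i)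
    (hφmul : ∀ (i j : ℕ) (x : F i) (y : F j),
      φ (i + j) ⟨(x : R) * (y : R), hmul i j x x.2 y y.2⟩ = φ i x * φ j y)
    (hφone : φ 0 ⟨1, hone⟩ = 1)
    (hS : IsNoetherianRing S) :
    IsNoetherianRing R :=
  noetherian_of_noetherian_graded_general R F hmul hexh S 𝒜 hinternal φ hrange hker0 hker hφmul hS
end

section
/- Let R be a complete discrete valuation ring with uniformizer π, and let C• be a cochain complex of flat (equivalently, torsion-free) R-modules such that every cohomology group H^n(C•) is killed by some fixed power of π. Then for each n, the natural map H^n(C•) → H^n(Ĉ•) to the cohomology of the π-adic completion of the complex is an isomorphism. -/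
/-!
The terms are `π`-torsion-free and each cohomology group is killed by a fixed power of `π`.

Injectivity: if `x = d z` in the completion, then `x - d z_m = π ^ m • b`, where `b` is a cocycle
by torsion-freeness, so `π ^ m • b` is a coboundary. Surjectivity: a Cauchy sequence `y_k` with
`d y_k ≡ 0 mod π ^ k` is first replaced by cocycles `g_k ≡ y_k mod π ^ k` (if
`d y = π ^ (k + m') • c`, then `c` is a cocycle, `π ^ m' • c = d p`, and `y - π ^ k • p` is a
cocycle); then `g_(k+1) - g_k = π ^ k • t_k` with `t_k` a cocycle, `π ^ m • t_k = d s_k`, and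
`∑ π ^ k • s_(k+m)` converges to a cochain whose boundary is `y - g_m`.
-/

section

variable {R : Type*} [CommRing R] {π : R} {M N P Q : Type*}
  [AddCommGroup M] [Module R M] [AddCommGroup N] [Module R N]
  [AddCommGroup P] [Module R P] [AddCommGroup Q] [Module R Q]

lemma mem_span_singleton_pow_smul_top {k : ℕ} {x : M} :
    x ∈ (Ideal.span {π} ^ k • ⊤ : Submodule R M) ↔ ∃ b, π ^ k • b = x := by
  simp [Ideal.span_singleton_pow, Submodule.ideal_span_singleton_smul,
    Submodule.mem_smul_pointwise_iff_exists]

lemma smodEq_span_singleton_pow_iff {k : ℕ} {x y : M} :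
    x ≡ y [SMOD (Ideal.span {π} ^ k • ⊤ : Submodule R M)] ↔ ∃ b, y = x + π ^ k • b := by
  rw [SModEq.comm, SModEq.sub_mem, mem_span_singleton_pow_smul_top]
  simp only [eq_sub_iff_add_eq, add_comm, eq_comm]

lemma map_eq_zero_of_map_pow_smul_eq_zero {g : N →ₗ[R] P} (hP : IsSMulRegular P π) {k : ℕ}
    {y : N} (hy : g (π ^ k • y) = 0) : g y = 0 :=
  (hP.pow k).right_eq_zero_of_smul (by rwa [← map_smul])

theorem exists_apply_sub_pow_smul_eq_zero {f : N →ₗ[R] P} {g : P →ₗ[R] Q} (hgf : g ∘ₗ f = 0)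
    (hQ : IsSMulRegular Q π) {m : ℕ} (hP : ∀ y, g y = 0 → π ^ m • y ∈ LinearMap.range f)
    {k : ℕ} {x : N} {c : P} (hx : f x = π ^ (k + m) • c) : ∃ p, f (x - π ^ k • p) = 0 := by
  have hc : g c = 0 := map_eq_zero_of_map_pow_smul_eq_zero hQ <| by
    rw [← hx, ← LinearMap.comp_apply, hgf, LinearMap.zero_apply]
  obtain ⟨p, hp⟩ := hP c hc
  exact ⟨p, by rw [map_sub, map_smul, hp, hx, smul_smul, ← pow_add, sub_self]⟩

namespace AdicCompletion

theorem mk_eq_mk_of_smodEq {I : Ideal R} {a b : AdicCauchySequence I M}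
    (h : ∀ k, a k ≡ b k [SMOD (I ^ k • ⊤ : Submodule R M)]) : mk I M a = mk I M b := by
  ext k
  exact h k

theorem isAdicCauchy_of_smodEq {I : Ideal R} (a : AdicCauchySequence I M) {b : ℕ → M}
    (h : ∀ k, b k ≡ a k [SMOD (I ^ k • ⊤ : Submodule R M)]) : IsAdicCauchy I M b := by
  intro j k hjk
  exact (h j).trans <| (a.property hjk).trans <|
    SModEq.mono (Submodule.smul_mono_left (Ideal.pow_le_pow_right hjk)) (h k).symm

theorem mem_range_of_of_mem_range_map {f : M →ₗ[R] N} {g : N →ₗ[R] P} (hgf : g ∘ₗ f = 0)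
    (hP : IsSMulRegular P π) {m : ℕ} (hN : ∀ y, g y = 0 → π ^ m • y ∈ LinearMap.range f)
    {x : N} (hx : g x = 0) (hxf : of (Ideal.span {π}) N x ∈ LinearMap.range (map _ f)) :
    x ∈ LinearMap.range f := by
  obtain ⟨z, hz⟩ := hxf
  obtain ⟨a, rfl⟩ := mk_surjective _ _ z
  have hm := congr_arg (fun y ↦ y.val m) hz
  simp only [map_mk, mk_apply_coe, of_apply, Submodule.mkQ_apply, ← SModEq.def,
    AdicCauchySequence.map_apply_coe, smodEq_span_singleton_pow_iff] at hm
  obtain ⟨b, rfl⟩ := hm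
  have hb : g b = 0 := map_eq_zero_of_map_pow_smul_eq_zero hP <| by
    simpa [← LinearMap.comp_apply, hgf] using hx
  obtain ⟨w, hw⟩ := hN b hb
  exact ⟨a m + w, by rw [map_add, hw]⟩

theorem exists_mk_eq_of_map_eq_zero {f : N →ₗ[R] P} {g : P →ₗ[R] Q} (hgf : g ∘ₗ f = 0)
    (hQ : IsSMulRegular Q π) {m : ℕ} (hP : ∀ y, g y = 0 → π ^ m • y ∈ LinearMap.range f)
    {y : AdicCompletion (Ideal.span {π}) N} (hy : map _ f y = 0) :
    ∃ a : AdicCauchySequence (Ideal.span {π}) N, mk _ _ a = y ∧ ∀ k, f (a k) = 0 := by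
  obtain ⟨a, rfl⟩ := mk_surjective _ _ y
  have hfa (k : ℕ) : ∃ c, f (a k) = π ^ k • c := by
    have hk := congr_arg (fun y ↦ y.val k) hy
    simp only [map_mk, mk_apply_coe, Submodule.mkQ_apply, AdicCauchySequence.map_apply_coe,
      val_zero, Pi.zero_apply, Submodule.Quotient.mk_eq_zero,
      mem_span_singleton_pow_smul_top] at hk
    obtain ⟨c, hc⟩ := hk
    exact ⟨c, hc.symm⟩
  choose c hc using fun k ↦ exists_apply_sub_pow_smul_eq_zero hgf hQ hP (hfa (k + m)).choose_spec
  have hca (k : ℕ) :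
      a (k + m) - π ^ k • c k ≡ a k [SMOD (Ideal.span {π} ^ k • ⊤ : Submodule R N)] :=
    (smodEq_span_singleton_pow_iff.2 ⟨c k, (sub_add_cancel (a (k + m)) _).symm⟩).trans
      (a.property (Nat.le_add_right k m)).symm
  exact ⟨⟨_, isAdicCauchy_of_smodEq a hca⟩, mk_eq_mk_of_smodEq hca, hc⟩

theorem mk_sub_of_mem_range_map {f : M →ₗ[R] N} {g : N →ₗ[R] P} (hP : IsSMulRegular P π)
    {m : ℕ} (hN : ∀ y, g y = 0 → π ^ m • y ∈ LinearMap.range f)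
    (a : AdicCauchySequence (Ideal.span {π}) N) (ha : ∀ k, g (a k) = 0) :
    mk _ _ a - of _ _ (a m) ∈ LinearMap.range (map _ f) := by
  have hstep (k : ℕ) : ∃ t, g t = 0 ∧ a (k + 1) = a k + π ^ k • t := by
    obtain ⟨t, ht⟩ := smodEq_span_singleton_pow_iff.1 (a.property (Nat.le_succ k))
    refine ⟨t, map_eq_zero_of_map_pow_smul_eq_zero hP (k := k) ?_, ht⟩
    rw [eq_sub_of_add_eq' ht.symm, map_sub, ha, ha, sub_self]
  choose t ht hat using hstep
  choose s hs using fun k ↦ hN (t k) (ht k)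
  let b : AdicCauchySequence (Ideal.span {π}) M :=
    AdicCauchySequence.mk _ _ (fun k ↦ ∑ i ∈ Finset.range k, π ^ i • s (i + m)) fun k ↦
      smodEq_span_singleton_pow_iff.2 ⟨s (k + m), Finset.sum_range_succ _ _⟩
  have hfb (k : ℕ) : f (b k) = a (k + m) - a m := by
    induction k with
    | zero => simp [b]
    | succ k ih =>
      simp only [b, AdicCauchySequence.mk_coe, Finset.sum_range_succ, map_add, map_smul] at ih ⊢
      rw [ih, hs, smul_smul, ← pow_add, Nat.add_right_comm, hat]
      abel
  refine ⟨mk _ _ b, ?_⟩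
  ext k
  simp only [map_mk, mk_apply_coe, AdicCauchySequence.map_apply_coe, val_sub_apply, of_apply,
    Submodule.mkQ_apply, hfb, ← Submodule.Quotient.mk_sub, ← SModEq.def]
  exact (a.property (Nat.le_add_right k m)).symm.sub SModEq.rfl

end AdicCompletion

end

theorem adic_completion_cohomology_of_bounded_torsion_general
    (𝒪 : Type*) [CommRing 𝒪] [IsDomain 𝒪]
    (π : 𝒪) (hπ : Irreducible π)
    (M : ℤ → Type*) [∀ n, AddCommGroup (M n)] [∀ n, Module 𝒪 (M n)]
    [∀ n, Module.Flat 𝒪 (M n)]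
    (d : ∀ n : ℤ, M n →ₗ[𝒪] M (n + 1))
    (hdd : ∀ n : ℤ, (d (n + 1)) ∘ₗ (d n) = 0)
    (htor : ∀ n : ℤ, ∃ m : ℕ, ∀ x : M (n + 1), d (n + 1) x = 0 →
      π ^ m • x ∈ LinearMap.range (d n))
    (n : ℤ) :
    -- surjectivity of `H^{n+1}(C•) → H^{n+1}(Ĉ•)`
    (∀ y : AdicCompletion (Ideal.span {π}) (M (n + 1)),
      AdicCompletion.map (Ideal.span {π}) (d (n + 1)) y = 0 →
      ∃ x : M (n + 1), d (n + 1) x = 0 ∧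
        ∃ z : AdicCompletion (Ideal.span {π}) (M n),
          y - AdicCompletion.of (Ideal.span {π}) (M (n + 1)) x =
            AdicCompletion.map (Ideal.span {π}) (d n) z) ∧
    -- injectivity of `H^{n+1}(C•) → H^{n+1}(Ĉ•)`
    (∀ x : M (n + 1), d (n + 1) x = 0 →
      (∃ z : AdicCompletion (Ideal.span {π}) (M n),
        AdicCompletion.of (Ideal.span {π}) (M (n + 1)) x =
          AdicCompletion.map (Ideal.span {π}) (d n) z) →
      ∃ w : M n, d n w = x) := by
  have hreg (k : ℤ) : IsSMulRegular (M k) π :=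
    Module.Flat.isSMulRegular_of_nonZeroDivisors (mem_nonZeroDivisors_of_ne_zero hπ.ne_zero)
  obtain ⟨m, hm⟩ := htor n
  obtain ⟨m', hm'⟩ := htor (n + 1)
  refine ⟨fun y hy ↦ ?_, fun x hx ⟨z, hz⟩ ↦ ?_⟩
  · obtain ⟨a, rfl, ha⟩ :=
      AdicCompletion.exists_mk_eq_of_map_eq_zero (hdd (n + 1)) (hreg _) hm' hy
    obtain ⟨z, hz⟩ := AdicCompletion.mk_sub_of_mem_range_map (hreg _) hm a ha
    exact ⟨a m, ha m, z, hz.symm⟩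
  · exact AdicCompletion.mem_range_of_of_mem_range_map (hdd n) (hreg _) hm hx ⟨z, hz.symm⟩

theorem adic_completion_cohomology_of_bounded_torsion
    (𝒪 : Type*) [CommRing 𝒪] [IsDomain 𝒪] [IsDiscreteValuationRing 𝒪]
    [IsAdicComplete (IsLocalRing.maximalIdeal 𝒪) 𝒪]
    (π : 𝒪) (hπ : Irreducible π)
    (M : ℤ → Type*) [∀ n, AddCommGroup (M n)] [∀ n, Module 𝒪 (M n)]
    [∀ n, Module.Flat 𝒪 (M n)]
    (d : ∀ n : ℤ, M n →ₗ[𝒪] M (n + 1))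
    (hdd : ∀ n : ℤ, (d (n + 1)) ∘ₗ (d n) = 0)
    (htor : ∀ n : ℤ, ∃ m : ℕ, ∀ x : M (n + 1), d (n + 1) x = 0 →
      π ^ m • x ∈ LinearMap.range (d n))
    (n : ℤ) :
    -- surjectivity of `H^{n+1}(C•) → H^{n+1}(Ĉ•)`
    (∀ y : AdicCompletion (Ideal.span {π}) (M (n + 1)),
      AdicCompletion.map (Ideal.span {π}) (d (n + 1)) y = 0 →
      ∃ x : M (n + 1), d (n + 1) x = 0 ∧
        ∃ z : AdicCompletion (Ideal.span {π}) (M n),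
          y - AdicCompletion.of (Ideal.span {π}) (M (n + 1)) x =
            AdicCompletion.map (Ideal.span {π}) (d n) z) ∧
    -- injectivity of `H^{n+1}(C•) → H^{n+1}(Ĉ•)`
    (∀ x : M (n + 1), d (n + 1) x = 0 →
      (∃ z : AdicCompletion (Ideal.span {π}) (M n),
        AdicCompletion.of (Ideal.span {π}) (M (n + 1)) x =
          AdicCompletion.map (Ideal.span {π}) (d n) z) →
      ∃ w : M n, d n w = x) :=
  adic_completion_cohomology_of_bounded_torsion_general 𝒪 π hπ M d hdd htor n
end

section
/- Let R be a deformable algebra over a complete discrete valuation ring with uniformizer π, with filtration F• R, and let R_1 = Σ_{i≥0} π^i F_i R be its first deformation. Then for every n ≥ 0 one has R_1 ∩ π^n R = Σ_{i≥n} π^i F_i R. -/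
/-!
The summands `π^i F_i R` of `R₁` with `i ≤ n` lie in `F_n`, those with `i ≥ n` in `π^n R`,
so the modular law reduces the claim to `F_n ∩ π^n R ⊆ π^n F_n`. That is a descent statement:
torsion-freeness of `gr_F R` says `π x ∈ F_i` forces `x ∈ F_i` whenever `x ∈ F_{i+1}`, and
exhaustiveness lets one walk `x` down from the level where it first appears.
-/

open Pointwise

namespace Submodule

section Descent

variable {𝒪 M : Type*} [CommSemiring 𝒪] [AddCommMonoid M] [Module 𝒪 M] {π : 𝒪}
  {F : ℕ → Submodule 𝒪 M}

theorem mem_of_smul_mem_of_mem_add (hmono : Monotone F)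
    (hflat : ∀ i : ℕ, ∀ x ∈ F (i + 1), π • x ∈ F i → x ∈ F i) {k : ℕ} {y : M}
    (hπy : π • y ∈ F k) : ∀ m : ℕ, y ∈ F (k + m) → y ∈ F k
  | 0, hy => hy
  | m + 1, hy =>
    mem_of_smul_mem_of_mem_add hmono hflat hπy m
      (hflat (k + m) y hy (hmono (Nat.le_add_right k m) hπy))

theorem mem_of_pow_smul_mem (hmono : Monotone F)
    (hflat : ∀ i : ℕ, ∀ x ∈ F (i + 1), π • x ∈ F i → x ∈ F i) (hexh : ∀ x : M, ∃ i, x ∈ F i)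
    {k : ℕ} : ∀ (j : ℕ) {y : M}, π ^ j • y ∈ F k → y ∈ F k
  | 0, y, h => by rwa [pow_zero, one_smul] at h
  | j + 1, y, h => by
    rw [pow_succ, ← smul_smul] at h
    obtain ⟨m, hm⟩ := hexh y
    exact mem_of_smul_mem_of_mem_add hmono hflat (mem_of_pow_smul_mem hmono hflat hexh j h) m
      (hmono (Nat.le_add_left m k) hm)

theorem inf_pow_smul_top_le (hmono : Monotone F)
    (hflat : ∀ i : ℕ, ∀ x ∈ F (i + 1), π • x ∈ F i → x ∈ F i) (hexh : ∀ x : M, ∃ i, x ∈ F i)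
    (j k : ℕ) : F k ⊓ π ^ j • ⊤ ≤ π ^ j • F k := by
  rintro x ⟨hxF, hx⟩
  obtain ⟨y, -, rfl⟩ := (mem_smul_pointwise_iff_exists _ _ _).1 hx
  exact smul_mem_pointwise_smul _ _ _ (mem_of_pow_smul_mem hmono hflat hexh j hxF)

end Descent

section Deformation

variable {𝒪 M : Type*} [CommRing 𝒪] [AddCommGroup M] [Module 𝒪 M] {π : 𝒪}
  {F : ℕ → Submodule 𝒪 M}

theorem iSup_pow_smul_le_sup (hmono : Monotone F) (n : ℕ) :
    ⨆ i, π ^ i • F i ≤ F n ⊔ ⨆ i, π ^ (n + i) • F (n + i) := by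
  refine iSup_le fun i => ?_
  rcases le_total i n with hi | hi
  · exact le_sup_of_le_left ((smul_le_self_of_tower _ _).trans (hmono hi))
  · obtain ⟨i, rfl⟩ := Nat.exists_eq_add_of_le hi
    exact le_sup_of_le_right (le_iSup_of_le i le_rfl)

theorem iSup_pow_add_smul_le_pow_smul_top (π : 𝒪) (F : ℕ → Submodule 𝒪 M) (n : ℕ) :
    ⨆ i, π ^ (n + i) • F (n + i) ≤ π ^ n • ⊤ := by
  refine iSup_le fun i x hx => ?_
  obtain ⟨y, -, rfl⟩ := (mem_smul_pointwise_iff_exists _ _ _).1 hx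
  rw [pow_add, ← smul_smul]
  exact smul_mem_pointwise_smul _ _ _ mem_top

theorem iSup_pow_smul_inf_pow_smul_top (hmono : Monotone F)
    (hflat : ∀ i : ℕ, ∀ x ∈ F (i + 1), π • x ∈ F i → x ∈ F i) (hexh : ∀ x : M, ∃ i, x ∈ F i)
    (n : ℕ) : (⨆ i, π ^ i • F i) ⊓ π ^ n • ⊤ = ⨆ i, π ^ (n + i) • F (n + i) := by
  set tail := ⨆ i, π ^ (n + i) • F (n + i)
  have htail : tail ≤ π ^ n • ⊤ := iSup_pow_add_smul_le_pow_smul_top π F n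
  refine le_antisymm ?_ (le_inf (iSup_le fun i => le_iSup_of_le (n + i) le_rfl) htail)
  calc (⨆ i, π ^ i • F i) ⊓ π ^ n • ⊤ ≤ (tail ⊔ F n) ⊓ π ^ n • ⊤ :=
        inf_le_inf_right _ (sup_comm (F n) tail ▸ iSup_pow_smul_le_sup hmono n)
    _ = tail ⊔ F n ⊓ π ^ n • ⊤ := sup_inf_assoc_of_le _ htail
    _ ≤ tail := sup_le le_rfl <|
        (inf_pow_smul_top_le hmono hflat hexh n n).trans (le_iSup_of_le 0 le_rfl)

end Deformation

end Submodule

theorem first_deformation_cap_pi_power_general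
    (𝒪 : Type*) [CommRing 𝒪]
    (π : 𝒪)
    (R : Type*) [Ring R] [Algebra 𝒪 R]
    (F : ℕ → Submodule 𝒪 R)
    (hmono : Monotone F)
    (hexh : ∀ r : R, ∃ i, r ∈ F i)
    (hgrflat : ∀ i : ℕ, ∀ x ∈ F (i + 1), π • x ∈ F i → x ∈ F i)
    (n : ℕ) :
    ((⨆ i : ℕ, Submodule.map ((π ^ i) • (LinearMap.id : R →ₗ[𝒪] R)) (F i)) ⊓
        Submodule.map ((π ^ n) • (LinearMap.id : R →ₗ[𝒪] R)) (⊤ : Submodule 𝒪 R)) =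
      ⨆ i : ℕ, Submodule.map ((π ^ (n + i)) • (LinearMap.id : R →ₗ[𝒪] R)) (F (n + i)) :=
  -- `Submodule.map (c • LinearMap.id) p` is the pointwise `c • p` by definition.
  Submodule.iSup_pow_smul_inf_pow_smul_top hmono hgrflat hexh n

theorem first_deformation_cap_pi_power
    (𝒪 : Type*) [CommRing 𝒪] [IsDomain 𝒪] [IsDiscreteValuationRing 𝒪]
    [IsAdicComplete (IsLocalRing.maximalIdeal 𝒪) 𝒪]
    (π : 𝒪) (hπ : Irreducible π)
    (R : Type*) [Ring R] [Algebra 𝒪 R]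
    (F : ℕ → Submodule 𝒪 R)
    (hmono : Monotone F)
    (hone : (1 : R) ∈ F 0)
    (hmul : ∀ i j : ℕ, ∀ x ∈ F i, ∀ y ∈ F j, x * y ∈ F (i + j))
    (hexh : ∀ r : R, ∃ i, r ∈ F i)
    (hgrflat : ∀ i : ℕ, ∀ x ∈ F (i + 1), π • x ∈ F i → x ∈ F i)
    (n : ℕ) :
    ((⨆ i : ℕ, Submodule.map ((π ^ i) • (LinearMap.id : R →ₗ[𝒪] R)) (F i)) ⊓
        Submodule.map ((π ^ n) • (LinearMap.id : R →ₗ[𝒪] R)) (⊤ : Submodule 𝒪 R)) =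
      ⨆ i : ℕ, Submodule.map ((π ^ (n + i)) • (LinearMap.id : R →ₗ[𝒪] R)) (F (n + i)) :=
  first_deformation_cap_pi_power_general 𝒪 π R F hmono hexh hgrflat n
end

section
/- Let R be a filtered ring with positive exhaustive filtration F•R, and let v₁, …, v_r ∈ F₁R be elements whose principal symbols in gr_F R, together with gr₀ = F₀R, generate gr_F R, and such that the ordered monomials v₁^{α₁}⋯v_r^{α_r} have symbols forming a basis of gr_F R as a graded free F₀R-module. Then the ordered monomials v₁^{α₁}⋯v_r^{α_r}, (α₁,…,α_r) ∈ ℕ^r, form a basis of R as a left F₀R-module. -/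
/-!
Both halves are inductions on filtration degree. For spanning, an element of `F (d + 1)` differs
from an `F 0`-combination of monomials by an element of `F d`, and `F 0` is spanned by the empty
monomial `1`. For independence, if a combination of monomials of degree `≤ d + 1` vanishes, its
part of degree exactly `d + 1` equals minus the rest, which lies in `F d`; independence of the
symbols kills that top part, and the rest has degree `≤ d`.
-/

open Finsupp

namespace FilteredRing

variable {R ι : Type*} [Ring R] {F : ℕ → AddSubgroup R}

theorem prod_map_pow_mem [SetLike.GradedMonoid F] {r : ℕ} {v : Fin r → R}
    (hv : ∀ i, v i ∈ F 1) (α : Fin r → ℕ) :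
    ((List.finRange r).map fun i => v i ^ α i).prod ∈ F (∑ i, α i) := by
  rw [Fin.sum_univ_def]
  refine SetLike.list_prod_map_mem_graded _ _ _ fun i _ => ?_
  simpa using SetLike.pow_mem_graded (α i) (hv i)

variable {m : ι → R}

theorem exists_linearCombination_eq_of_mem {i₀ : ι} (hm₀ : m i₀ = 1)
    (hstep : ∀ (d : ℕ) (x : R), x ∈ F (d + 1) →
      ∃ c : ι →₀ R, (∀ i, c i ∈ F 0) ∧ x - linearCombination R m c ∈ F d)
    (d : ℕ) {x : R} (hx : x ∈ F d) :
    ∃ c : ι →₀ R, (∀ i, c i ∈ F 0) ∧ linearCombination R m c = x := by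
  induction d generalizing x with
  | zero =>
    classical
    refine ⟨single i₀ x, fun i => ?_, by simp [hm₀]⟩
    rw [single_apply]
    split_ifs
    exacts [hx, zero_mem _]
  | succ d ih =>
    obtain ⟨c, hc, hrest⟩ := hstep d x hx
    obtain ⟨c', hc', hc'x⟩ := ih hrest
    exact ⟨c + c', fun i => add_mem (hc i) (hc' i), by rw [map_add, hc'x, add_sub_cancel]⟩

variable {deg : ι → ℕ}

theorem linearCombination_mem [SetLike.GradedMonoid F] (hF : Monotone F)
    (hm : ∀ i, m i ∈ F (deg i)) {d : ℕ} {c : ι →₀ R} (hc : ∀ i, c i ∈ F 0)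
    (hdeg : ∀ i ∈ c.support, deg i ≤ d) : linearCombination R m c ∈ F d := by
  rw [linearCombination_apply]
  refine sum_mem fun i hi => hF (hdeg i hi) ?_
  simpa using SetLike.mul_mem_graded (hc i) (hm i)

theorem eq_zero_of_linearCombination_eq_zero_of_deg_le [SetLike.GradedMonoid F]
    (hF : Monotone F) (hm : ∀ i, m i ∈ F (deg i)) {i₀ : ι} (hdeg₀ : ∀ i, deg i = 0 → i = i₀)
    (hm₀ : m i₀ = 1)
    (hindep : ∀ (d : ℕ) (c : ι →₀ R), (∀ i, c i ∈ F 0) →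
      (∀ i ∈ c.support, deg i = d + 1) → linearCombination R m c ∈ F d → c = 0)
    (d : ℕ) {c : ι →₀ R} (hc : ∀ i, c i ∈ F 0) (hdeg : ∀ i ∈ c.support, deg i ≤ d)
    (hzero : linearCombination R m c = 0) : c = 0 := by
  classical
  induction d generalizing c with
  | zero =>
    obtain ⟨b, rfl⟩ : ∃ b, c = single i₀ b := support_subset_singleton'.mp fun i hi =>
      Finset.mem_singleton.mpr (hdeg₀ i (Nat.le_zero.mp (hdeg i hi)))
    simpa [hm₀] using hzero
  | succ d ih =>
    set top := c.filter (deg · = d + 1)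
    set low := c.filter (¬deg · = d + 1)
    have hsplit : top + low = c := filter_add_filter_not c _
    have hcoeff : ∀ (p : ι → Prop) [DecidablePred p] (i : ι), c.filter p i ∈ F 0 := by
      intro p _ i
      rw [filter_apply]
      split_ifs
      exacts [hc i, zero_mem _]
    have hlow_deg : ∀ i ∈ low.support, deg i ≤ d := by
      intro i hi
      rw [support_filter, Finset.mem_filter] at hi
      have := hdeg i hi.1
      omega
    have hlow_mem : linearCombination R m low ∈ F d :=
      linearCombination_mem hF hm (hcoeff _) hlow_deg
    have htop : top = 0 := by
      refine hindep d top (hcoeff _) (fun i hi => ?_) ?_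
      · rw [support_filter, Finset.mem_filter] at hi
        exact hi.2
      · rw [← hsplit, map_add, add_eq_zero_iff_eq_neg] at hzero
        exact hzero ▸ neg_mem hlow_mem
    rw [← hsplit, htop, zero_add] at hzero ⊢
    exact ih (hcoeff _) hlow_deg hzero

theorem eq_zero_of_linearCombination_eq_zero [SetLike.GradedMonoid F]
    (hF : Monotone F) (hm : ∀ i, m i ∈ F (deg i)) {i₀ : ι} (hdeg₀ : ∀ i, deg i = 0 → i = i₀)
    (hm₀ : m i₀ = 1)
    (hindep : ∀ (d : ℕ) (c : ι →₀ R), (∀ i, c i ∈ F 0) →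
      (∀ i ∈ c.support, deg i = d + 1) → linearCombination R m c ∈ F d → c = 0)
    {c : ι →₀ R} (hc : ∀ i, c i ∈ F 0) (hzero : linearCombination R m c = 0) : c = 0 :=
  eq_zero_of_linearCombination_eq_zero_of_deg_le hF hm hdeg₀ hm₀ hindep (c.support.sup deg) hc
    (fun _ hi => Finset.le_sup hi) hzero

end FilteredRing

open FilteredRing in
theorem pbw_basis_from_graded_basis
    (R : Type*) [Ring R]
    (F : ℕ → AddSubgroup R)
    (hmono : Monotone F)
    (hone : (1 : R) ∈ F 0)
    (hmul : ∀ i j : ℕ, ∀ x ∈ F i, ∀ y ∈ F j, x * y ∈ F (i + j))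
    (hexh : ∀ x : R, ∃ i, x ∈ F i)
    (r : ℕ) (v : Fin r → R) (hv : ∀ i, v i ∈ F 1)
    (mono : (Fin r → ℕ) → R)
    (hmonodef : ∀ α : Fin r → ℕ,
      mono α = ((List.finRange r).map (fun i => v i ^ α i)).prod)
    -- existence of symbol expansions in each degree
    (hexist : ∀ (d : ℕ) (x : R), x ∈ F (d + 1) →
      ∃ c : (Fin r → ℕ) →₀ R,
        (∀ α, c α ∈ F 0) ∧
        (∀ α ∈ c.support, (∑ i, α i) = d + 1) ∧
        x - c.sum (fun α a => a * mono α) ∈ F d)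
    -- independence of the symbols in each degree
    (hindep : ∀ (d : ℕ) (c : (Fin r → ℕ) →₀ R),
      (∀ α, c α ∈ F 0) →
      (∀ α ∈ c.support, (∑ i, α i) = d + 1) →
      c.sum (fun α a => a * mono α) ∈ F d → c = 0) :
    (∀ x : R, ∃ c : (Fin r → ℕ) →₀ R,
      (∀ α, c α ∈ F 0) ∧ x = c.sum (fun α a => a * mono α)) ∧
    (∀ c c' : (Fin r → ℕ) →₀ R,
      (∀ α, c α ∈ F 0) → (∀ α, c' α ∈ F 0) →
      c.sum (fun α a => a * mono α) = c'.sum (fun α a => a * mono α) →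
      c = c') := by
  have : SetLike.GradedMonoid F :=
    { one_mem := hone, mul_mem := fun i j _ _ hx hy => hmul i j _ hx _ hy }
  have hsum_eq (c : (Fin r → ℕ) →₀ R) :
      c.sum (fun α a => a * mono α) = linearCombination R mono c := rfl
  simp only [hsum_eq] at hexist hindep ⊢
  have hmono_mem (α : Fin r → ℕ) : mono α ∈ F (∑ i, α i) := hmonodef α ▸ prod_map_pow_mem hv α
  have hmono_zero : mono 0 = 1 := by simp [hmonodef]
  have hdeg_zero (α : Fin r → ℕ) (hα : ∑ i, α i = 0) : α = 0 :=
    funext fun i => Finset.sum_eq_zero_iff.mp hα i (Finset.mem_univ i)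
  refine ⟨fun x => ?_, fun c c' hc hc' heq => ?_⟩
  · obtain ⟨d, hd⟩ := hexh x
    obtain ⟨c, hc, hcx⟩ := exists_linearCombination_eq_of_mem hmono_zero
      (fun d x hx => (hexist d x hx).imp fun _ h => ⟨h.1, h.2.2⟩) d hd
    exact ⟨c, hc, hcx.symm⟩
  · rw [← sub_eq_zero, ← map_sub] at heq
    exact sub_eq_zero.mp <| eq_zero_of_linearCombination_eq_zero hmono hmono_mem hdeg_zero
      hmono_zero hindep (fun α => sub_mem (hc α) (hc' α)) heq
end

section
/- Let R → S be a ring homomorphism and suppose there is an exhaustive positive filtration on R and on S compatible with the map, such that F₀R → F₀S is flat and gr_F R is a free F₀R-module with gr_F S ≅ F₀S ⊗_{F₀R} gr_F R as graded F₀S-modules via the induced map. Then S ≅ F₀S ⊗_{F₀R} R as filtered left F₀S-modules; in particular if F₀R → F₀S is (faithfully) flat then R → S is (faithfully) flat as a map of left F₀R-modules. -/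
/-!
Both halves of the basis statement are inductions on the filtration degree. An element of
`F_{d+1} S` differs from an `F₀S`-combination of the basis vectors of degree `d + 1` by an element
of `F_d S`; and in a relation among basis vectors of degree at most `d + 1`, the top-degree part
lies in `F_d S`, so it vanishes by independence of the symbols in `gr_{d+1} S`. By exhaustiveness,
`φ ∘ e` is then an `F₀S`-basis of `S`, and flatness over `F₀R` passes from `F₀S` to the free
`F₀S`-module `S` coordinatewise. For faithful flatness, the coordinates of an element of `F₀S`
are supported on basis vectors of degree `0`, which lie in `F₀S`; hence `f₀(I) S ∩ F₀S = f₀(I) F₀S`.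
-/

open Finsupp Module

section TrivialRelation

variable {R A M : Type*} [Ring R] [Ring A] [AddCommGroup M] [Module A M]

def IsTrivialRelationVia (f : R →+* A) {n : ℕ} (a : Fin n → R) (x : Fin n → M) : Prop :=
  ∃ (m : ℕ) (b : Fin n → Fin m → R) (y : Fin m → M),
    (∀ i, x i = ∑ j, f (b i j) • y j) ∧ ∀ j, ∑ i, a i * b i j = 0

/-- The equational criterion for flatness of `M` as a left `R`-module through `f`, used as the
definition of flatness since `Module.Flat.iff_forall_isTrivialRelation` needs commutative rings. -/
def IsEquationallyFlatVia (f : R →+* A) (M : Type*) [AddCommGroup M] [Module A M] : Prop :=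
  ∀ (n : ℕ) (a : Fin n → R) (x : Fin n → M), ∑ i, f (a i) • x i = 0 →
    IsTrivialRelationVia f a x

namespace IsTrivialRelationVia

variable {f : R →+* A} {n : ℕ} {a : Fin n → R}

theorem zero : IsTrivialRelationVia f a (0 : Fin n → M) :=
  ⟨0, fun _ => Fin.elim0, Fin.elim0, fun _ => by simp, fun j => Fin.elim0 j⟩

theorem add {x x' : Fin n → M} (h : IsTrivialRelationVia f a x)
    (h' : IsTrivialRelationVia f a x') : IsTrivialRelationVia f a (x + x') := by
  obtain ⟨m, b, y, hx, hb⟩ := h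
  obtain ⟨m', b', y', hx', hb'⟩ := h'
  refine ⟨m + m', fun i => Fin.append (b i) (b' i), Fin.append y y', fun i => ?_, fun j => ?_⟩
  · simp [Fin.sum_univ_add, hx i, hx' i]
  · refine Fin.addCases (fun j => ?_) (fun j => ?_) j <;> simp [hb, hb']

theorem sum {κ : Type*} {s : Finset κ} {x : κ → Fin n → M}
    (h : ∀ k ∈ s, IsTrivialRelationVia f a (x k)) : IsTrivialRelationVia f a (∑ k ∈ s, x k) := by
  classical
  induction s using Finset.induction_on with
  | empty => exact zero
  | insert k s hk ih =>
    rw [Finset.sum_insert hk]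
    exact (h k (s.mem_insert_self k)).add (ih fun k hk => h k (Finset.mem_insert_of_mem hk))

theorem smul_right {c : Fin n → A} (h : IsTrivialRelationVia f a c) (v : M) :
    IsTrivialRelationVia f a (fun i => c i • v) := by
  obtain ⟨m, b, y, hc, hb⟩ := h
  exact ⟨m, b, fun j => y j • v, fun i => by simp [hc i, Finset.sum_smul, mul_smul], hb⟩

end IsTrivialRelationVia

theorem IsEquationallyFlatVia.of_basis {f : R →+* A} {κ : Type*}
    (hA : IsEquationallyFlatVia f A) (b : Basis κ A M) : IsEquationallyFlatVia f M := by
  classical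
  intro n a x hx
  have hcoord : ∀ k, ∑ i, f (a i) * b.repr (x i) k = 0 := fun k => by
    simpa [Finsupp.finsetSum_apply] using congrArg (fun z => b.repr z k) hx
  set K := Finset.univ.biUnion fun i => (b.repr (x i)).support
  have hx_eq : x = ∑ k ∈ K, fun i => b.repr (x i) k • b k := by
    funext i
    rw [Finset.sum_apply]
    conv_lhs => rw [← b.linearCombination_repr (x i), linearCombination_apply]
    exact sum_of_support_subset _
      (Finset.subset_biUnion_of_mem (fun i => (b.repr (x i)).support) (Finset.mem_univ i)) _
      fun _ _ => zero_smul A _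
  rw [hx_eq]
  exact IsTrivialRelationVia.sum fun k _ => (hA n a _ (hcoord k)).smul_right (b k)

end TrivialRelation

section FilteredBasis

variable {A M ι : Type*} [Ring A] [AddCommGroup M] [Module A M]
  {F : ℕ → AddSubgroup M} {v : ι → M} {dg : ι → ℕ}

theorem linearCombination_mem_of_degree_le (hF : Monotone F)
    (hv : ∀ k (a : A), a • v k ∈ F (dg k)) {N : ℕ} {c : ι →₀ A}
    (hc : ∀ k ∈ c.support, dg k ≤ N) : linearCombination A v c ∈ F N := by
  rw [linearCombination_apply]
  exact AddSubgroup.sum_mem _ fun k hk => hF (hc k hk) (hv k (c k))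

theorem exists_linearCombination_eq_of_mem
    (hex0 : ∀ y ∈ F 0, ∃ c : ι →₀ A, (∀ k ∈ c.support, dg k = 0) ∧ y = linearCombination A v c)
    (hex : ∀ d : ℕ, ∀ y ∈ F (d + 1), ∃ c : ι →₀ A,
      (∀ k ∈ c.support, dg k = d + 1) ∧ y - linearCombination A v c ∈ F d) :
    ∀ N : ℕ, ∀ y ∈ F N, ∃ c : ι →₀ A,
      (∀ k ∈ c.support, dg k ≤ N) ∧ y = linearCombination A v c := by
  classical
  intro N
  induction N with
  | zero =>
    intro y hy
    obtain ⟨c, hc, rfl⟩ := hex0 y hy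
    exact ⟨c, fun k hk => (hc k hk).le, rfl⟩
  | succ d ih =>
    intro y hy
    obtain ⟨c, hc, hrest⟩ := hex d y hy
    obtain ⟨c', hc', hrest_eq⟩ := ih _ hrest
    refine ⟨c + c', fun k hk => ?_, by rw [map_add, ← hrest_eq, add_sub_cancel]⟩
    rcases Finset.mem_union.mp (support_add hk) with hk | hk
    · exact (hc k hk).le
    · exact (hc' k hk).trans d.le_succ

theorem eq_zero_of_linearCombination_eq_zero_of_degree_le
    (hF : Monotone F) (hv : ∀ k (a : A), a • v k ∈ F (dg k))
    (hind0 : ∀ c : ι →₀ A, (∀ k ∈ c.support, dg k = 0) → linearCombination A v c = 0 → c = 0)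
    (hind : ∀ d : ℕ, ∀ c : ι →₀ A, (∀ k ∈ c.support, dg k = d + 1) →
      linearCombination A v c ∈ F d → c = 0) :
    ∀ N : ℕ, ∀ c : ι →₀ A, (∀ k ∈ c.support, dg k ≤ N) → linearCombination A v c = 0 → c = 0 := by
  intro N
  induction N with
  | zero => exact fun c hc => hind0 c fun k hk => Nat.le_zero.mp (hc k hk)
  | succ N ih =>
    classical
    intro c hc h
    set c₁ := c.filter fun k => dg k = N + 1
    set c₂ := c.filter fun k => dg k ≠ N + 1
    have hsplit : c₁ + c₂ = c := filter_add_filter_not c _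
    have hc₁ : ∀ k ∈ c₁.support, dg k = N + 1 := fun k hk => (Finset.mem_filter.mp hk).2
    have hc₂ : ∀ k ∈ c₂.support, dg k ≤ N := fun k hk => by
      have hk := Finset.mem_filter.mp hk
      have := hc k hk.1
      omega
    have hlc : linearCombination A v c₁ = -linearCombination A v c₂ := by
      rw [eq_neg_iff_add_eq_zero, ← map_add, hsplit, h]
    have hc₁_zero : c₁ = 0 :=
      hind N c₁ hc₁ (hlc ▸ neg_mem (linearCombination_mem_of_degree_le hF hv hc₂))
    have hc₂_zero : c₂ = 0 := ih c₂ hc₂ (by simpa [hc₁_zero] using hlc.symm)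
    rw [← hsplit, hc₁_zero, hc₂_zero, add_zero]

theorem linearIndependent_of_graded (hF : Monotone F) (hv : ∀ k (a : A), a • v k ∈ F (dg k))
    (hind0 : ∀ c : ι →₀ A, (∀ k ∈ c.support, dg k = 0) → linearCombination A v c = 0 → c = 0)
    (hind : ∀ d : ℕ, ∀ c : ι →₀ A, (∀ k ∈ c.support, dg k = d + 1) →
      linearCombination A v c ∈ F d → c = 0) :
    LinearIndependent A v :=
  linearIndependent_iff.mpr fun c =>
    eq_zero_of_linearCombination_eq_zero_of_degree_le hF hv hind0 hind (c.support.sup dg) c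
      fun _ hk => Finset.le_sup hk

theorem linearCombination_surjective_of_exhaustive (hexh : ∀ y : M, ∃ i, y ∈ F i)
    (hex : ∀ N : ℕ, ∀ y ∈ F N, ∃ c : ι →₀ A,
      (∀ k ∈ c.support, dg k ≤ N) ∧ y = linearCombination A v c) :
    Function.Surjective (linearCombination A v) := fun y =>
  let ⟨N, hy⟩ := hexh y
  let ⟨c, _, hc⟩ := hex N y hy
  ⟨c, hc.symm⟩

end FilteredBasis

section IdealExtension

variable {R A : Type*} [Ring R] [Ring A]

theorem AddSubgroup.mul_right_mem_closure {s : Set A} (hs : ∀ z ∈ s, ∀ t, z * t ∈ s) {z : A}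
    (hz : z ∈ AddSubgroup.closure s) (t : A) : z * t ∈ AddSubgroup.closure s := by
  have hle : AddSubgroup.closure s ≤ (AddSubgroup.closure s).comap (AddMonoidHom.mulRight t) :=
    (AddSubgroup.closure_le _).mpr fun z hz => AddSubgroup.subset_closure (hs z hz t)
  exact hle hz

theorem Module.Basis.repr_mem_closure_smul {M κ : Type*} [AddCommGroup M] [Module A M]
    (b : Basis κ A M) (f : R →+* A) (I : Set R) {z : M}
    (hz : z ∈ AddSubgroup.closure {z : M | ∃ a ∈ I, ∃ w : M, z = f a • w}) (k : κ) :
    b.repr z k ∈ AddSubgroup.closure {z : A | ∃ a ∈ I, ∃ w : A, z = f a * w} := by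
  induction hz using AddSubgroup.closure_induction with
  | mem z hz =>
    obtain ⟨a, ha, w, rfl⟩ := hz
    exact AddSubgroup.subset_closure ⟨a, ha, b.repr w k, by simp⟩
  | zero => simp
  | add z z' _ _ hz hz' => simpa using add_mem hz hz'
  | neg z _ hz => simpa using neg_mem hz

theorem mem_of_map_eq_sum_mul {S κ : Type*} [Ring S] {ιS : A →+* S} (hιS : Function.Injective ιS)
    {N : AddSubgroup A} (hN : ∀ z ∈ N, ∀ t, z * t ∈ N) {v : κ → S} {c : κ →₀ A}
    (hc : ∀ k, c k ∈ N) (hv : ∀ k ∈ c.support, v k ∈ Set.range ιS) {s : A}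
    (hs : ιS s = c.sum fun k a => ιS a * v k) : s ∈ N := by
  have hmem : ιS s ∈ N.map ιS.toAddMonoidHom := by
    rw [hs]
    refine AddSubgroup.sum_mem _ fun k hk => ?_
    obtain ⟨t, ht⟩ := hv k hk
    exact ⟨c k * t, hN _ (hc k) t, by simp [ht]⟩
  exact (AddSubgroup.mem_map_iff_mem hιS).mp hmem

end IdealExtension

theorem filtered_base_change_of_graded_base_change_general
    (R S : Type*) [Ring R] [Ring S] (φ : R →+* S)
    (FR : ℕ → AddSubgroup R) (FS : ℕ → AddSubgroup S)
    (hSmono : Monotone FS)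
    (hSmul : ∀ i j : ℕ, ∀ x ∈ FS i, ∀ y ∈ FS j, x * y ∈ FS (i + j))
    (hSexh : ∀ y : S, ∃ i, y ∈ FS i)
    (hφ : ∀ i : ℕ, ∀ x ∈ FR i, φ x ∈ FS i)
    -- the degree-zero subrings `F₀R` and `F₀S`, presented as rings
    (R₀ S₀ : Type*) [Ring R₀] [Ring S₀]
    (ιS : S₀ →+* S)
    (hιS : Function.Injective ιS)
    (hιSrange : ∀ y : S, y ∈ FS 0 ↔ ∃ a : S₀, ιS a = y)
    (f₀ : R₀ →+* S₀)
    -- a graded basis of `gr_F R` over `F₀R`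
    (ι : Type*) (e : ι → R) (dg : ι → ℕ) (he : ∀ k, e k ∈ FR (dg k))
    -- `gr_F S ≅ F₀S ⊗_{F₀R} gr_F R`: the symbols of `φ ∘ e` form a graded
    -- basis of `gr_F S` over `F₀S`
    (hexS0 : ∀ y ∈ FS 0, ∃ c : ι →₀ S₀,
      (∀ k ∈ c.support, dg k = 0) ∧ y = c.sum (fun k a => ιS a * φ (e k)))
    (hexS : ∀ d : ℕ, ∀ y ∈ FS (d + 1), ∃ c : ι →₀ S₀,
      (∀ k ∈ c.support, dg k = d + 1) ∧
      y - c.sum (fun k a => ιS a * φ (e k)) ∈ FS d)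
    (hindS0 : ∀ c : ι →₀ S₀, (∀ k ∈ c.support, dg k = 0) →
      c.sum (fun k a => ιS a * φ (e k)) = 0 → c = 0)
    (hindS : ∀ d : ℕ, ∀ c : ι →₀ S₀, (∀ k ∈ c.support, dg k = d + 1) →
      c.sum (fun k a => ιS a * φ (e k)) ∈ FS d → c = 0) :
    -- (1) `S ≅ F₀S ⊗_{F₀R} R` as filtered left `F₀S`-modules: `S` is a free
    -- left `F₀S`-module on `(φ (e k))_k`, compatibly with the filtrations
    ((∀ y : S, ∃ c : ι →₀ S₀, y = c.sum (fun k a => ιS a * φ (e k))) ∧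
      (∀ c c' : ι →₀ S₀,
        c.sum (fun k a => ιS a * φ (e k)) = c'.sum (fun k a => ιS a * φ (e k)) →
        c = c') ∧
      (∀ i : ℕ, ∀ y ∈ FS i, ∃ c : ι →₀ S₀,
        (∀ k ∈ c.support, dg k ≤ i) ∧ y = c.sum (fun k a => ιS a * φ (e k)))) ∧
    -- (2) if `F₀R → F₀S` is flat then `R → S` is flat as a map of left
    -- `F₀R`-modules (equational criterion for `S` as a left `R₀`-module)
    ((∀ (n : ℕ) (a : Fin n → R₀) (x : Fin n → S₀),
        (∑ i, f₀ (a i) * x i) = 0 →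
        ∃ (m : ℕ) (b : Fin n → Fin m → R₀) (y : Fin m → S₀),
          (∀ i, x i = ∑ j, f₀ (b i j) * y j) ∧
          (∀ j, (∑ i, a i * b i j) = 0)) →
      (∀ (n : ℕ) (a : Fin n → R₀) (x : Fin n → S),
        (∑ i, ιS (f₀ (a i)) * x i) = 0 →
        ∃ (m : ℕ) (b : Fin n → Fin m → R₀) (y : Fin m → S),
          (∀ i, x i = ∑ j, ιS (f₀ (b i j)) * y j) ∧
          (∀ j, (∑ i, a i * b i j) = 0))) ∧
    -- (3) if `F₀R → F₀S` is moreover faithfully flat, so is `R → S` as a map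
    -- of left `F₀R`-modules
    (((∀ (n : ℕ) (a : Fin n → R₀) (x : Fin n → S₀),
        (∑ i, f₀ (a i) * x i) = 0 →
        ∃ (m : ℕ) (b : Fin n → Fin m → R₀) (y : Fin m → S₀),
          (∀ i, x i = ∑ j, f₀ (b i j) * y j) ∧
          (∀ j, (∑ i, a i * b i j) = 0)) ∧
      (∀ I : Ideal R₀, I.IsMaximal →
        ∃ s : S₀, s ∉ AddSubgroup.closure
          {z : S₀ | ∃ a ∈ I, ∃ w : S₀, z = f₀ a * w})) →
      (∀ I : Ideal R₀, I.IsMaximal →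
        ∃ s : S, s ∉ AddSubgroup.closure
          {z : S | ∃ a ∈ I, ∃ w : S, z = ιS (f₀ a) * w})) := by
  let _ : Module S₀ S := ιS.toModule
  have hφe : ∀ k, φ (e k) ∈ FS (dg k) := fun k => hφ _ _ (he k)
  have hv : ∀ k (a : S₀), a • φ (e k) ∈ FS (dg k) := fun k a =>
    zero_add (dg k) ▸ hSmul 0 _ _ ((hιSrange _).mpr ⟨a, rfl⟩) _ (hφe k)
  have hex := exists_linearCombination_eq_of_mem hexS0 hexS
  have hli : LinearIndependent S₀ fun k => φ (e k) :=
    linearIndependent_of_graded hSmono hv hindS0 hindS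
  have hsurj := linearCombination_surjective_of_exhaustive hSexh hex
  have hspan : ⊤ ≤ Submodule.span S₀ (Set.range fun k => φ (e k)) := by
    rw [← range_linearCombination, LinearMap.range_eq_top.mpr hsurj]
  let b : Basis ι S₀ S := Basis.mk hli hspan
  refine ⟨⟨fun y => (hsurj y).imp fun _ => Eq.symm, fun _ _ h => hli h, hex⟩,
    fun hflat => IsEquationallyFlatVia.of_basis hflat b, ?_⟩
  rintro ⟨-, hfaith⟩ I hI
  obtain ⟨s₀, hs₀⟩ := hfaith I hI
  refine ⟨ιS s₀, fun hmem => hs₀ ?_⟩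
  obtain ⟨c, hc, hs₀c⟩ := hex 0 (ιS s₀) ((hιSrange _).mpr ⟨s₀, rfl⟩)
  have hcoeff : ∀ k, c k ∈ AddSubgroup.closure {z : S₀ | ∃ a ∈ I, ∃ w : S₀, z = f₀ a * w} := by
    rw [← b.repr_linearCombination c, Basis.coe_mk hli hspan, ← hs₀c]
    exact b.repr_mem_closure_smul f₀ I hmem
  have hdeg0 : ∀ k ∈ c.support, φ (e k) ∈ Set.range ιS := fun k hk =>
    (hιSrange _).mp (Nat.le_zero.mp (hc k hk) ▸ hφe k)
  refine mem_of_map_eq_sum_mul hιS (fun z hz t => ?_) hcoeff hdeg0 hs₀c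
  refine AddSubgroup.mul_right_mem_closure ?_ hz t
  rintro _ ⟨a, ha, w, rfl⟩ t
  exact ⟨a, ha, w * t, mul_assoc _ _ _⟩

theorem filtered_base_change_of_graded_base_change
    (R S : Type*) [Ring R] [Ring S] (φ : R →+* S)
    (FR : ℕ → AddSubgroup R) (FS : ℕ → AddSubgroup S)
    (hRmono : Monotone FR) (hRone : (1 : R) ∈ FR 0)
    (hRmul : ∀ i j : ℕ, ∀ x ∈ FR i, ∀ y ∈ FR j, x * y ∈ FR (i + j))
    (hRexh : ∀ x : R, ∃ i, x ∈ FR i)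
    (hSmono : Monotone FS) (hSone : (1 : S) ∈ FS 0)
    (hSmul : ∀ i j : ℕ, ∀ x ∈ FS i, ∀ y ∈ FS j, x * y ∈ FS (i + j))
    (hSexh : ∀ y : S, ∃ i, y ∈ FS i)
    (hφ : ∀ i : ℕ, ∀ x ∈ FR i, φ x ∈ FS i)
    -- the degree-zero subrings `F₀R` and `F₀S`, presented as rings
    (R₀ S₀ : Type*) [Ring R₀] [Ring S₀]
    (ιR : R₀ →+* R) (ιS : S₀ →+* S)
    (hιR : Function.Injective ιR) (hιS : Function.Injective ιS)
    (hιRrange : ∀ x : R, x ∈ FR 0 ↔ ∃ a : R₀, ιR a = x)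
    (hιSrange : ∀ y : S, y ∈ FS 0 ↔ ∃ a : S₀, ιS a = y)
    (f₀ : R₀ →+* S₀) (hf₀ : ∀ a : R₀, φ (ιR a) = ιS (f₀ a))
    -- a graded basis of `gr_F R` over `F₀R`
    (ι : Type*) (e : ι → R) (dg : ι → ℕ) (he : ∀ k, e k ∈ FR (dg k))
    (hexR0 : ∀ x ∈ FR 0, ∃ c : ι →₀ R₀,
      (∀ k ∈ c.support, dg k = 0) ∧ x = c.sum (fun k a => ιR a * e k))
    (hexR : ∀ d : ℕ, ∀ x ∈ FR (d + 1), ∃ c : ι →₀ R₀,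
      (∀ k ∈ c.support, dg k = d + 1) ∧
      x - c.sum (fun k a => ιR a * e k) ∈ FR d)
    (hindR0 : ∀ c : ι →₀ R₀, (∀ k ∈ c.support, dg k = 0) →
      c.sum (fun k a => ιR a * e k) = 0 → c = 0)
    (hindR : ∀ d : ℕ, ∀ c : ι →₀ R₀, (∀ k ∈ c.support, dg k = d + 1) →
      c.sum (fun k a => ιR a * e k) ∈ FR d → c = 0)
    -- `gr_F S ≅ F₀S ⊗_{F₀R} gr_F R`: the symbols of `φ ∘ e` form a graded
    -- basis of `gr_F S` over `F₀S`
    (hexS0 : ∀ y ∈ FS 0, ∃ c : ι →₀ S₀,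
      (∀ k ∈ c.support, dg k = 0) ∧ y = c.sum (fun k a => ιS a * φ (e k)))
    (hexS : ∀ d : ℕ, ∀ y ∈ FS (d + 1), ∃ c : ι →₀ S₀,
      (∀ k ∈ c.support, dg k = d + 1) ∧
      y - c.sum (fun k a => ιS a * φ (e k)) ∈ FS d)
    (hindS0 : ∀ c : ι →₀ S₀, (∀ k ∈ c.support, dg k = 0) →
      c.sum (fun k a => ιS a * φ (e k)) = 0 → c = 0)
    (hindS : ∀ d : ℕ, ∀ c : ι →₀ S₀, (∀ k ∈ c.support, dg k = d + 1) →
      c.sum (fun k a => ιS a * φ (e k)) ∈ FS d → c = 0) :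
    -- (1) `S ≅ F₀S ⊗_{F₀R} R` as filtered left `F₀S`-modules: `S` is a free
    -- left `F₀S`-module on `(φ (e k))_k`, compatibly with the filtrations
    ((∀ y : S, ∃ c : ι →₀ S₀, y = c.sum (fun k a => ιS a * φ (e k))) ∧
      (∀ c c' : ι →₀ S₀,
        c.sum (fun k a => ιS a * φ (e k)) = c'.sum (fun k a => ιS a * φ (e k)) →
        c = c') ∧
      (∀ i : ℕ, ∀ y ∈ FS i, ∃ c : ι →₀ S₀,
        (∀ k ∈ c.support, dg k ≤ i) ∧ y = c.sum (fun k a => ιS a * φ (e k)))) ∧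
    -- (2) if `F₀R → F₀S` is flat then `R → S` is flat as a map of left
    -- `F₀R`-modules (equational criterion for `S` as a left `R₀`-module)
    ((∀ (n : ℕ) (a : Fin n → R₀) (x : Fin n → S₀),
        (∑ i, f₀ (a i) * x i) = 0 →
        ∃ (m : ℕ) (b : Fin n → Fin m → R₀) (y : Fin m → S₀),
          (∀ i, x i = ∑ j, f₀ (b i j) * y j) ∧
          (∀ j, (∑ i, a i * b i j) = 0)) →
      (∀ (n : ℕ) (a : Fin n → R₀) (x : Fin n → S),
        (∑ i, ιS (f₀ (a i)) * x i) = 0 →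
        ∃ (m : ℕ) (b : Fin n → Fin m → R₀) (y : Fin m → S),
          (∀ i, x i = ∑ j, ιS (f₀ (b i j)) * y j) ∧
          (∀ j, (∑ i, a i * b i j) = 0))) ∧
    -- (3) if `F₀R → F₀S` is moreover faithfully flat, so is `R → S` as a map
    -- of left `F₀R`-modules
    (((∀ (n : ℕ) (a : Fin n → R₀) (x : Fin n → S₀),
        (∑ i, f₀ (a i) * x i) = 0 →
        ∃ (m : ℕ) (b : Fin n → Fin m → R₀) (y : Fin m → S₀),
          (∀ i, x i = ∑ j, f₀ (b i j) * y j) ∧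
          (∀ j, (∑ i, a i * b i j) = 0)) ∧
      (∀ I : Ideal R₀, I.IsMaximal →
        ∃ s : S₀, s ∉ AddSubgroup.closure
          {z : S₀ | ∃ a ∈ I, ∃ w : S₀, z = f₀ a * w})) →
      (∀ I : Ideal R₀, I.IsMaximal →
        ∃ s : S, s ∉ AddSubgroup.closure
          {z : S | ∃ a ∈ I, ∃ w : S, z = ιS (f₀ a) * w})) :=
  filtered_base_change_of_graded_base_change_general R S φ FR FS hSmono hSmul hSexh hφ R₀ S₀ ιS hιS
    hιSrange f₀ ι e dg he hexS0 hexS hindS0 hindS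
end
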